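/- Monotonicity of the residuals of the fixed-point PGD: if 3Mκ ≤ 1, then along any fixed-point PGD sequence (f_n) the residual norms are non-increasing: ‖R_{n+1}‖_F ≤ ‖R_n‖_F for all n, where R_n = b − f_n − Ã(f_n). -/

import Mathlib

/-!
Write `g = r ⊗ s` for the best rank-one approximation of the residual `R`, so that the next
residual is `R - g - Ã g`. Optimality of `g` gives `⟪R - g, g⟫ = 0`, hence
`‖R - g‖² = ‖R‖² - ‖g‖²`, and `|⟪R - g, h⟫| ≤ ‖g‖ ‖h‖` for every rank-one `h` (the second
singular value of `R` does not exceed the first). Every term `A_μ g B_μᵀ` of `Ã g`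
is rank one of norm at most `κ ‖g‖`, so with `c = Mκ`
`‖R - g - Ã g‖² ≤ ‖R‖² - (1 - 2c - c²) ‖g‖² ≤ ‖R‖²` as soon as `c ≤ 1/3`.
-/

open Matrix Filter Topology

noncomputable section

/-- The Frobenius inner product `⟨A,B⟩_F = trace(Aᵀ B)` on real `p × q` matrices. -/
def frobInner {p q : ℕ} (A B : Matrix (Fin p) (Fin q) ℝ) : ℝ := (Aᵀ * B).trace

/-- The Frobenius norm. -/
def frobNorm {p q : ℕ} (A : Matrix (Fin p) (Fin q) ℝ) : ℝ := Real.sqrt (frobInner A A)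

/-- The rank-one matrix `r ⊗ s` with entries `(r ⊗ s)_{ij} = r i * s j`. -/
def tensor {p q : ℕ} (r : EuclideanSpace ℝ (Fin p)) (s : EuclideanSpace ℝ (Fin q)) :
    Matrix (Fin p) (Fin q) ℝ := Matrix.of fun i j => r i * s j
/-- The tensorized operator `Ã(g) = Σ_{μ} A_μ g B_μᵀ`. -/
def Atil {p q M : ℕ} (A : Fin M → Matrix (Fin p) (Fin p) ℝ)
    (B : Fin M → Matrix (Fin q) (Fin q) ℝ)
    (g : Matrix (Fin p) (Fin q) ℝ) : Matrix (Fin p) (Fin q) ℝ :=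
  ∑ μ, A μ * g * (B μ)ᵀ

open scoped RealInnerProductSpace

section InnerProductSpace

variable {E : Type*} [NormedAddCommGroup E] [InnerProductSpace ℝ E]

theorem inner_eq_zero_of_forall_norm_le_norm_sub_smul {x h : E}
    (hmin : ∀ t : ℝ, ‖x‖ ≤ ‖x - t • h‖) : ⟪x, h⟫ = 0 := by
  have hquad : ∀ t : ℝ, 0 ≤ ‖h‖ ^ 2 * (t * t) + (-2 * ⟪x, h⟫) * t + 0 := fun t => by
    have := pow_le_pow_left₀ (norm_nonneg x) (hmin t) 2
    rw [norm_sub_sq_real, real_inner_smul_right, norm_smul, Real.norm_eq_abs, mul_pow,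
      sq_abs] at this
    linarith
  have := discrim_le_zero hquad
  rw [discrim] at this
  nlinarith [sq_nonneg ⟪x, h⟫]

theorem abs_inner_le_of_forall_norm_le_norm_sub_smul {R g h : E} (horth : ⟪R - g, g⟫ = 0)
    (hmin : ∀ t : ℝ, ‖R - g‖ ≤ ‖R - t • h‖) : |⟪R, h⟫| ≤ ‖g‖ * ‖h‖ := by
  have hpyth : ‖R‖ ^ 2 = ‖R - g‖ ^ 2 + ‖g‖ ^ 2 := by
    simpa only [sq, sub_add_cancel] using norm_add_sq_eq_norm_sq_add_norm_sq_real horth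
  have hquad : ∀ t : ℝ, 0 ≤ ‖h‖ ^ 2 * (t * t) + (-2 * ⟪R, h⟫) * t + ‖g‖ ^ 2 := fun t => by
    have := pow_le_pow_left₀ (norm_nonneg _) (hmin t) 2
    rw [norm_sub_sq_real R (t • h), real_inner_smul_right, norm_smul, Real.norm_eq_abs, mul_pow,
      sq_abs] at this
    linarith
  have := discrim_le_zero hquad
  rw [discrim] at this
  exact abs_le_of_sq_le_sq (by linarith) (by positivity)

theorem exists_eq_add_smul_inner_eq_zero_norm_le (r u : E) :
    ∃ (α : ℝ) (u' : E), u = u' + α • r ∧ ⟪r, u'⟫ = 0 ∧ ‖u'‖ ≤ ‖u‖ := by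
  set α := ⟪r, u⟫ / ‖r‖ ^ 2
  have horth : ⟪r, u - α • r⟫ = 0 := by
    rcases eq_or_ne r 0 with rfl | hr
    · simp
    · rw [inner_sub_right, real_inner_smul_right, real_inner_self_eq_norm_sq,
        div_mul_cancel₀ _ (by positivity), sub_self]
  refine ⟨α, u - α • r, by abel, horth, ?_⟩
  have hperp : ⟪u - α • r, α • r⟫ = 0 := by
    rw [real_inner_smul_right, real_inner_comm, horth, mul_zero]
  have hpyth := norm_add_sq_eq_norm_sq_add_norm_sq_real hperp
  rw [sub_add_cancel] at hpyth
  nlinarith [norm_nonneg u, norm_nonneg (u - α • r), sq_nonneg ‖α • r‖]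

end InnerProductSpace

section BestRankOneApprox

variable {E F G : Type*} [NormedAddCommGroup E] [InnerProductSpace ℝ E]
  [NormedAddCommGroup F] [InnerProductSpace ℝ F] [NormedAddCommGroup G] [InnerProductSpace ℝ G]

-- `T u v` plays the role of `u ⊗ v`; matrices enter through `tensorₗ` and the isometry `frobVec`.
def IsBestRankOneApprox (T : F →ₗ[ℝ] G →ₗ[ℝ] E) (R : E) (r : F) (s : G) : Prop :=
  ∀ u v, ‖R - T r s‖ ≤ ‖R - T u v‖

namespace IsBestRankOneApprox

variable {T : F →ₗ[ℝ] G →ₗ[ℝ] E} {R : E} {r : F} {s : G}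

theorem inner_sub_apply_left_eq_zero (hbest : IsBestRankOneApprox T R r s) (w : F) :
    ⟪R - T r s, T w s⟫ = 0 :=
  inner_eq_zero_of_forall_norm_le_norm_sub_smul fun t => by
    have := hbest (r + t • w) s
    rwa [map_add, map_smul, LinearMap.add_apply, LinearMap.smul_apply, sub_add_eq_sub_sub] at this

theorem inner_sub_apply_right_eq_zero (hbest : IsBestRankOneApprox T R r s) (z : G) :
    ⟪R - T r s, T r z⟫ = 0 :=
  inner_eq_zero_of_forall_norm_le_norm_sub_smul fun t => by
    have := hbest r (s + t • z)
    rwa [map_add, map_smul, sub_add_eq_sub_sub] at this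

theorem abs_inner_le (hbest : IsBestRankOneApprox T R r s) (u : F) (v : G) :
    |⟪R, T u v⟫| ≤ ‖T r s‖ * ‖T u v‖ :=
  abs_inner_le_of_forall_norm_le_norm_sub_smul (hbest.inner_sub_apply_left_eq_zero r) fun t => by
    have := hbest (t • u) v
    rwa [map_smul, LinearMap.smul_apply] at this

variable (hT : ∀ u w v z, ⟪T u v, T w z⟫ = ⟪u, w⟫ * ⟪v, z⟫)
include hT

theorem norm_apply_apply (u : F) (v : G) : ‖T u v‖ = ‖u‖ * ‖v‖ := by
  rw [← sq_eq_sq₀ (norm_nonneg _) (by positivity), mul_pow, ← real_inner_self_eq_norm_sq,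
    ← real_inner_self_eq_norm_sq, ← real_inner_self_eq_norm_sq, hT]

theorem abs_inner_sub_le (hbest : IsBestRankOneApprox T R r s) (u : F) (v : G) :
    |⟪R - T r s, T u v⟫| ≤ ‖T r s‖ * ‖T u v‖ := by
  obtain ⟨α, u', rfl, hru', hu'⟩ := exists_eq_add_smul_inner_eq_zero_norm_le r u
  obtain ⟨β, v', rfl, hsv', hv'⟩ := exists_eq_add_smul_inner_eq_zero_norm_le s v
  have hexpand : T (u' + α • r) (v' + β • s) =
      T u' v' + β • T u' s + α • T r v' + β • α • T r s := by
    simp only [map_add, map_smul, LinearMap.add_apply, LinearMap.smul_apply, smul_add]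
    abel
  -- Only the component of `T u v` along `T u' v'` survives, and there `R - T r s` acts as `R`.
  have hreduce : ⟪R - T r s, T (u' + α • r) (v' + β • s)⟫ = ⟪R, T u' v'⟫ := by
    rw [hexpand, inner_add_right, inner_add_right, inner_add_right, real_inner_smul_right,
      real_inner_smul_right, real_inner_smul_right, real_inner_smul_right,
      hbest.inner_sub_apply_left_eq_zero, hbest.inner_sub_apply_right_eq_zero,
      hbest.inner_sub_apply_left_eq_zero, inner_sub_left, hT, hru', hsv']
    ring
  have hnorm : ‖T u' v'‖ ≤ ‖T (u' + α • r) (v' + β • s)‖ := by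
    rw [norm_apply_apply hT, norm_apply_apply hT]
    gcongr
  rw [hreduce]
  exact (hbest.abs_inner_le u' v').trans (by gcongr)

theorem norm_sub_sub_sum_le (hbest : IsBestRankOneApprox T R r s) {ι : Type*} [Fintype ι]
    (h : ι → E) (hrank : ∀ μ, ∃ u v, h μ = T u v) {κ : ℝ} (hκ : ∀ μ, ‖h μ‖ ≤ κ * ‖T r s‖)
    (hcond : 3 * Fintype.card ι * κ ≤ 1) : ‖R - T r s - ∑ μ, h μ‖ ≤ ‖R‖ := by
  set c := Fintype.card ι * κ
  have hpyth : ‖R - T r s‖ ^ 2 = ‖R‖ ^ 2 - ‖T r s‖ ^ 2 := by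
    have := norm_add_sq_eq_norm_sq_add_norm_sq_real (hbest.inner_sub_apply_left_eq_zero r)
    rw [sub_add_cancel, ← sq, ← sq, ← sq] at this
    linarith
  have hcross : -⟪R - T r s, ∑ μ, h μ⟫ ≤ c * ‖T r s‖ ^ 2 := by
    rw [inner_sum, ← Finset.sum_neg_distrib]
    calc ∑ μ, -⟪R - T r s, h μ⟫ ≤ ∑ _μ : ι, κ * ‖T r s‖ ^ 2 := by
          refine Finset.sum_le_sum fun μ _ => ?_
          obtain ⟨u, v, huv⟩ := hrank μ
          have := neg_le_of_abs_le (huv ▸ abs_inner_sub_le hT hbest u v)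
          nlinarith [hκ μ, norm_nonneg (T r s)]
      _ = c * ‖T r s‖ ^ 2 := by simp [c, mul_assoc]
  have hsum : ‖∑ μ, h μ‖ ≤ c * ‖T r s‖ :=
    calc ‖∑ μ, h μ‖ ≤ ∑ μ, ‖h μ‖ := norm_sum_le _ _
      _ ≤ ∑ _μ : ι, κ * ‖T r s‖ := Finset.sum_le_sum fun μ _ => hκ μ
      _ = c * ‖T r s‖ := by simp [c, mul_assoc]
  have hc : 0 ≤ c * ‖T r s‖ := (norm_nonneg _).trans hsum
  rw [← sq_le_sq₀ (norm_nonneg _) (norm_nonneg _), norm_sub_sq_real, hpyth]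
  nlinarith [norm_nonneg (∑ μ, h μ), mul_nonneg hc (norm_nonneg (T r s))]

end IsBestRankOneApprox

end BestRankOneApprox

section Matrix

variable {p q : ℕ}

def frobVec : Matrix (Fin p) (Fin q) ℝ →ₗ[ℝ] EuclideanSpace ℝ (Fin p × Fin q) where
  toFun A := WithLp.toLp 2 fun ij => A ij.1 ij.2
  map_add' _ _ := rfl
  map_smul' _ _ := rfl

@[simp]
theorem frobVec_apply (A : Matrix (Fin p) (Fin q) ℝ) (ij : Fin p × Fin q) :
    frobVec A ij = A ij.1 ij.2 :=
  rfl

theorem frobInner_eq_inner (A B : Matrix (Fin p) (Fin q) ℝ) :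
    frobInner A B = ⟪frobVec A, frobVec B⟫ := by
  simp only [frobInner, trace, diag_apply, Matrix.mul_apply, transpose_apply, PiLp.inner_apply,
    frobVec_apply, RCLike.inner_apply, Real.ringHom_apply, mul_comm, Fintype.sum_prod_type]
  exact Finset.sum_comm

theorem frobNorm_eq_norm (A : Matrix (Fin p) (Fin q) ℝ) : frobNorm A = ‖frobVec A‖ := by
  rw [frobNorm, frobInner_eq_inner, real_inner_self_eq_norm_sq, Real.sqrt_sq (norm_nonneg _)]

def tensorₗ :
    EuclideanSpace ℝ (Fin p) →ₗ[ℝ] EuclideanSpace ℝ (Fin q) →ₗ[ℝ]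
      EuclideanSpace ℝ (Fin p × Fin q) :=
  LinearMap.mk₂ ℝ (fun u v => frobVec (tensor u v))
    (fun _ _ _ => by ext; simp [tensor, add_mul])
    (fun _ _ _ => by ext; simp [tensor, mul_assoc])
    (fun _ _ _ => by ext; simp [tensor, mul_add])
    (fun _ _ _ => by ext; simp [tensor, mul_left_comm])

theorem tensorₗ_apply (u : EuclideanSpace ℝ (Fin p)) (v : EuclideanSpace ℝ (Fin q)) :
    tensorₗ u v = frobVec (tensor u v) :=
  rfl

theorem inner_tensorₗ (u w : EuclideanSpace ℝ (Fin p)) (v z : EuclideanSpace ℝ (Fin q)) :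
    ⟪tensorₗ u v, tensorₗ w z⟫ = ⟪u, w⟫ * ⟪v, z⟫ := by
  simp only [tensorₗ_apply, PiLp.inner_apply, Fintype.sum_prod_type,
    Finset.sum_mul_sum]
  simp [tensor, mul_mul_mul_comm]

theorem mul_tensor_mul_transpose (A : Matrix (Fin p) (Fin p) ℝ) (B : Matrix (Fin q) (Fin q) ℝ)
    (u : EuclideanSpace ℝ (Fin p)) (v : EuclideanSpace ℝ (Fin q)) :
    A * tensor u v * Bᵀ = tensor (WithLp.toLp 2 (A *ᵥ u)) (WithLp.toLp 2 (B *ᵥ v)) := by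
  ext i j
  simp only [tensor, Matrix.of_apply, Matrix.mul_apply, Matrix.transpose_apply,
    Matrix.mulVec, dotProduct, Finset.sum_mul, Finset.mul_sum]
  exact Finset.sum_congr rfl fun k _ => Finset.sum_congr rfl fun l _ => by ring

theorem Atil_add {M : ℕ} (A : Fin M → Matrix (Fin p) (Fin p) ℝ)
    (B : Fin M → Matrix (Fin q) (Fin q) ℝ) (X Y : Matrix (Fin p) (Fin q) ℝ) :
    Atil A B (X + Y) = Atil A B X + Atil A B Y := by
  simp [Atil, Matrix.mul_add, Matrix.add_mul, Finset.sum_add_distrib]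

end Matrix

theorem stmt_11_general {p q M : ℕ}
    (A : Fin M → Matrix (Fin p) (Fin p) ℝ) (B : Fin M → Matrix (Fin q) (Fin q) ℝ)
    (κ : ℝ)
    (hκ : ∀ (μ : Fin M) (g : Matrix (Fin p) (Fin q) ℝ),
      frobNorm (A μ * g * (B μ)ᵀ) ≤ κ * frobNorm g)
    (hcond : 3 * M * κ ≤ 1)
    (b : Matrix (Fin p) (Fin q) ℝ)
    (f : ℕ → Matrix (Fin p) (Fin q) ℝ)
    (r : ℕ → EuclideanSpace ℝ (Fin p)) (s : ℕ → EuclideanSpace ℝ (Fin q))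
    (Rres : ℕ → Matrix (Fin p) (Fin q) ℝ)
    (hR : ∀ n, Rres n = b - f n - Atil A B (f n))
    (hstep : ∀ n, f (n + 1) = f n + tensor (r n) (s n))
    (hbest : ∀ (n : ℕ) (u : EuclideanSpace ℝ (Fin p)) (v : EuclideanSpace ℝ (Fin q)),
      frobNorm (Rres n - tensor (r n) (s n)) ≤ frobNorm (Rres n - tensor u v)) :
    ∀ n, frobNorm (Rres (n + 1)) ≤ frobNorm (Rres n) := by
  intro n
  have hres : Rres (n + 1) = Rres n - tensor (r n) (s n) - Atil A B (tensor (r n) (s n)) := by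
    rw [hR, hR, hstep, Atil_add]
    abel
  have hbest' : IsBestRankOneApprox tensorₗ (frobVec (Rres n)) (r n) (s n) := fun u v => by
    simpa only [frobNorm_eq_norm, map_sub, tensorₗ_apply] using hbest n u v
  rw [hres, frobNorm_eq_norm, frobNorm_eq_norm, map_sub, map_sub, Atil, map_sum]
  exact hbest'.norm_sub_sub_sum_le inner_tensorₗ _
    (fun μ => ⟨_, _, congrArg frobVec (mul_tensor_mul_transpose _ _ _ _)⟩)
    (fun μ => by simpa only [frobNorm_eq_norm, tensorₗ_apply] using hκ μ (tensor (r n) (s n)))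
    (by rwa [Fintype.card_fin])

/-- Monotonicity of the residuals of the fixed-point PGD: if `3Mκ ≤ 1`, along any
fixed-point PGD sequence the residual norms `‖R_n‖_F` are non-increasing. -/
theorem stmt_11 {p q M : ℕ} (hp : 1 ≤ p) (hq : 1 ≤ q) (hM : 1 ≤ M)
    (A : Fin M → Matrix (Fin p) (Fin p) ℝ) (B : Fin M → Matrix (Fin q) (Fin q) ℝ)
    (κ : ℝ) (hκ0 : 0 ≤ κ)
    (hκ : ∀ (μ : Fin M) (g : Matrix (Fin p) (Fin q) ℝ),
      frobNorm (A μ * g * (B μ)ᵀ) ≤ κ * frobNorm g)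
    (hcond : 3 * M * κ ≤ 1)
    (b g₀ : Matrix (Fin p) (Fin q) ℝ)
    (f : ℕ → Matrix (Fin p) (Fin q) ℝ)
    (r : ℕ → EuclideanSpace ℝ (Fin p)) (s : ℕ → EuclideanSpace ℝ (Fin q))
    (Rres : ℕ → Matrix (Fin p) (Fin q) ℝ)
    (hR : ∀ n, Rres n = b - f n - Atil A B (f n))
    (hf0 : f 0 = g₀)
    (hstep : ∀ n, f (n + 1) = f n + tensor (r n) (s n))
    (hbest : ∀ (n : ℕ) (u : EuclideanSpace ℝ (Fin p)) (v : EuclideanSpace ℝ (Fin q)),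
      frobNorm (Rres n - tensor (r n) (s n)) ≤ frobNorm (Rres n - tensor u v)) :
    ∀ n, frobNorm (Rres (n + 1)) ≤ frobNorm (Rres n) :=
  stmt_11_general A B κ hκ hcond b f r s Rres hR hstep hbest
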